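/- Let A be a symmetric matrix diagonalized by an orthonormal basis e₁,...,eₙ with eigenvalues μ₁,...,μₙ, and μ₀ ∈ ℝ. Then the i-th eigenvalue of T_k^∞(μ₀, A) (with eigenvector eᵢ) equals σ_{k,i}^∞(μ₀, μ) = σ_k^∞(μ₀, μ₁,...,μ_{i−1}, μ_{i+1},...,μₙ). -/
import Mathlib


/-- The `k`-th elementary symmetric polynomial of `μ : Fin n → ℝ`. -/
noncomputable def esymm {n : ℕ} (k : ℕ) (μ : Fin n → ℝ) : ℝ :=
  ∑ s ∈ Finset.powersetCard k (Finset.univ : Finset (Fin n)), ∏ i ∈ s, μ i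

/-- The weighted elementary symmetric function
`σ_k^∞(μ₀, μ) = ∑_{j=0}^k (μ₀^j / j!) σ_{k-j}(μ)`. -/
noncomputable def esymmInf {n : ℕ} (k : ℕ) (μ0 : ℝ) (μ : Fin n → ℝ) : ℝ :=
  ∑ j ∈ Finset.range (k + 1), μ0 ^ j / (Nat.factorial j) * esymm (k - j) μ

/-- The weighted Newton transformations: `T₀^∞ = I` and
`T_k^∞(μ₀, A) = σ_k^∞(μ₀, μ) I − A T_{k-1}^∞(μ₀, A)`, where `μ` are the eigenvalues of `A`. -/
noncomputable def newtonInf {n : ℕ} (μ0 : ℝ) (μ : Fin n → ℝ)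
    (A : Matrix (Fin n) (Fin n) ℝ) : ℕ → Matrix (Fin n) (Fin n) ℝ
  | 0 => 1
  | (k + 1) => esymmInf (k + 1) μ0 μ • (1 : Matrix (Fin n) (Fin n) ℝ) - A * newtonInf μ0 μ A k

lemma esymm_comp_succAbove {n : ℕ} (k : ℕ) (μ : Fin (n + 1) → ℝ) (i : Fin (n + 1)) :
    esymm k (μ ∘ i.succAbove) =
      ∑ s ∈ Finset.powersetCard k (Finset.univ.map i.succAboveEmb), ∏ j ∈ s, μ j := by
  rw [esymm, Finset.powersetCard_map, Finset.sum_map]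
  refine Finset.sum_congr rfl fun s hs => ?_
  show _ = ∏ j ∈ s.map i.succAboveEmb, μ j
  rw [Finset.prod_map]
  rfl

lemma esymm_split {n : ℕ} (k : ℕ) (μ : Fin (n + 1) → ℝ) (i : Fin (n + 1)) :
    esymm (k + 1) μ =
      esymm (k + 1) (μ ∘ i.succAbove) + μ i * esymm k (μ ∘ i.succAbove) := by
  have hi : i ∉ Finset.univ.map i.succAboveEmb := by
    simp [Fin.succAbove_ne]
  have huniv : (Finset.univ : Finset (Fin (n + 1)))
      = insert i (Finset.univ.map i.succAboveEmb) := by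
    ext x
    simp only [Finset.mem_univ, true_iff, Finset.mem_insert, Finset.mem_map, Finset.mem_univ,
      true_and, Fin.succAboveEmb_apply]
    rcases eq_or_ne x i with rfl | h
    · exact Or.inl rfl
    · exact Or.inr (Fin.exists_succAbove_eq h)
  rw [esymm, huniv, Finset.powersetCard_succ_insert hi, Finset.sum_union, esymm_comp_succAbove,
    esymm_comp_succAbove, Finset.sum_image, Finset.mul_sum]
  · congr 1
    refine Finset.sum_congr rfl fun s hs => ?_
    have hsmem : i ∉ s := fun h => hi ((Finset.mem_powersetCard.mp hs).1 h)
    rw [Finset.prod_insert hsmem]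
  · intro s hs t ht hst
    have hs' : i ∉ s := fun h => hi ((Finset.mem_powersetCard.mp hs).1 h)
    have ht' : i ∉ t := fun h => hi ((Finset.mem_powersetCard.mp ht).1 h)
    rw [← Finset.erase_insert hs', ← Finset.erase_insert ht', hst]
  · rw [Finset.disjoint_left]
    intro s hs hs'
    obtain ⟨t, ht, rfl⟩ := Finset.mem_image.mp hs'
    exact (fun h => hi ((Finset.mem_powersetCard.mp hs).1 h)) (Finset.mem_insert_self i t)

lemma esymmInf_split {n : ℕ} (k : ℕ) (μ0 : ℝ) (μ : Fin (n + 1) → ℝ) (i : Fin (n + 1)) :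
    esymmInf (k + 1) μ0 μ =
      esymmInf (k + 1) μ0 (μ ∘ i.succAbove) + μ i * esymmInf k μ0 (μ ∘ i.succAbove) := by
  unfold esymmInf
  have h0 : esymm 0 μ = esymm 0 (μ ∘ i.succAbove) := by
    simp [esymm, Finset.powersetCard_zero]
  have this : ∀ j ∈ Finset.range (k + 1),
      μ0 ^ j / (Nat.factorial j) * esymm (k + 1 - j) μ
        = μ0 ^ j / (Nat.factorial j) * esymm (k + 1 - j) (μ ∘ i.succAbove)
          + μ i * (μ0 ^ j / (Nat.factorial j) * esymm (k - j) (μ ∘ i.succAbove)) := by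
    intro j hj
    have hj' : j ≤ k := Nat.lt_succ_iff.mp (Finset.mem_range.mp hj)
    have hkj : k + 1 - j = (k - j) + 1 := by omega
    rw [hkj, esymm_split (k - j) μ i]
    ring
  rw [Finset.sum_range_succ, Finset.sum_range_succ (n := k + 1)]
  simp only [Nat.sub_self]
  rw [h0,
    Finset.sum_congr rfl this, Finset.sum_add_distrib, Finset.mul_sum]
  ring

lemma mulVec_col {n : ℕ} (μ : Fin (n + 1) → ℝ)
    (P A : Matrix (Fin (n + 1)) (Fin (n + 1)) ℝ) (hP : P * P.transpose = 1)
    (hA : A = P * Matrix.diagonal μ * P.transpose) (i : Fin (n + 1)) :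
    A.mulVec (fun j => P j i) = μ i • (fun j => P j i) := by
  have hP' : P.transpose * P = 1 := mul_eq_one_comm.mp hP
  subst hA
  have h1 : (fun j => P j i) = P.mulVec (Pi.single i 1) := by
    funext l
    simp [Matrix.mulVec_single]
  have h2 : (Matrix.diagonal μ).mulVec (Pi.single i 1) = μ i • (Pi.single i 1 : Fin (n + 1) → ℝ) := by
    funext l
    rcases eq_or_ne l i with rfl | h
    · simp [Matrix.mulVec_diagonal]
    · simp [Matrix.mulVec_diagonal, Pi.single_apply, h]
  rw [h1, Matrix.mulVec_mulVec, mul_assoc, hP', mul_one, ← Matrix.mulVec_mulVec, h2,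
    Matrix.mulVec_smul]

/-- If `A = P D(μ) Pᵀ` with `P` orthogonal (so the columns of `P` form an orthonormal basis of
eigenvectors of `A` with eigenvalues `μ`), then the `i`-th column of `P` is an eigenvector of
`T_k^∞(μ₀, A)` with eigenvalue `σ_{k,i}^∞(μ₀, μ) = σ_k^∞(μ₀, μ with μᵢ removed)`. -/
theorem newtonInf_eigenvalue {n : ℕ} (k : ℕ) (μ0 : ℝ) (μ : Fin (n + 1) → ℝ)
    (P A : Matrix (Fin (n + 1)) (Fin (n + 1)) ℝ) (hP : P * P.transpose = 1)
    (hA : A = P * Matrix.diagonal μ * P.transpose) (i : Fin (n + 1)) :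
    (newtonInf μ0 μ A k).mulVec (fun j => P j i) =
      esymmInf k μ0 (μ ∘ i.succAbove) • (fun j => P j i) := by
  induction k with
  | zero =>
    rw [newtonInf, Matrix.one_mulVec]
    have : esymmInf 0 μ0 (μ ∘ i.succAbove) = 1 := by
      simp [esymmInf, esymm, Finset.powersetCard_zero]
    rw [this, one_smul]
  | succ k ih =>
    rw [newtonInf, Matrix.sub_mulVec, Matrix.smul_mulVec, Matrix.one_mulVec,
      ← Matrix.mulVec_mulVec, ih, Matrix.mulVec_smul, mulVec_col μ P A hP hA i,
      esymmInf_split k μ0 μ i, smul_smul, mul_comm (esymmInf k μ0 (μ ∘ i.succAbove)) (μ i),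
      add_smul]
    abel
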